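/- Let L ∈ K[z,∂_z], assume dim_K V_1(L) = d with 0 < d < ∞, and let f_1,…,f_d be a K-basis of V_1(L). Let n be a positive integer, A ∈ K[t], and R ∈ I_n(L) with R ≠ 0. Define P(z) := (R*·A)(z) (the polynomial R*·A(t) with t replaced by z) and Q_j(z) := φ_{f_j}((P(z) − P(t))/(z − t)) for 1 ≤ j ≤ d, where φ_{f_j} is applied in the variable t to the polynomial (P(z)−P(t))/(z−t) ∈ K[z][t]. Assume P ≠ 0. Then: (a) ord_∞(P·f_j − Q_j) ≥ n + 1 for every 1 ≤ j ≤ d, so (P,Q_1,…,Q_d) is a weight n Padé-type approximant of (f_1,…,f_d); and (b) for every 1 ≤ j ≤ d one has P(z)f_j(z) − Q_j(z) = ∑_{k≥n} φ_{f_j}(t^k·P(t))·z^{−(k+1)}. -/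

import Mathlib

open Polynomial

/-- Formal Laurent-type series in `1/z`: the function records the coefficient of `z^{-k}`. -/
abbrev LS (K : Type*) := ℤ → K

variable {K : Type*} [Field K]

/-- membership in `(1/z)·K[[1/z]]`: no terms `z^{-k}` with `k ≤ 0`. -/
def InTail (f : LS K) : Prop := ∀ k : ℤ, k ≤ 0 → f k = 0

/-- The Laurent-series representation of a polynomial `P ∈ K[z]`. -/
noncomputable def ofPoly (P : Polynomial K) : LS K := fun k => if k ≤ 0 then P.coeff (-k).toNat else 0

/-- `f` is (the Laurent expansion of) a polynomial in `z`. -/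
def IsPol (f : LS K) : Prop := ∃ P : Polynomial K, f = ofPoly P

/-- Multiplication by `z`. -/
def zmul (f : LS K) : LS K := fun k => f (k + 1)

/-- The derivation `∂_z`. -/
noncomputable def dz (f : LS K) : LS K := fun k => ((1 - k : ℤ) : K) * f (k - 1)

/-- Multiplication by a polynomial `P(z)`. -/
noncomputable def pmul (P : Polynomial K) (f : LS K) : LS K :=
  fun k => ∑ i ∈ Finset.range (P.natDegree + 1), P.coeff i * f (k + i)

/-- The projection `π` deleting the polynomial part. -/
def piProj (f : LS K) : LS K := fun k => if 1 ≤ k then f k else 0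

/-- The action of the differential operator `L = ∑_{j=0}^m (-1)^j a_j(z) ∂_z^j`. -/
noncomputable def Wact (m : ℕ) (a : ℕ → Polynomial K) (f : LS K) : LS K :=
  ∑ j ∈ Finset.range (m + 1), ((-1 : K) ^ j) • pmul (a j) (dz^[j] f)

/-- The formal adjoint `L*` acting on `K[t]`: `L*·P = ∑_j (d/dt)^j (a_j(t)·P(t))`. -/
noncomputable def Wadj (m : ℕ) (a : ℕ → Polynomial K) (P : Polynomial K) : Polynomial K :=
  ∑ j ∈ Finset.range (m + 1), Polynomial.derivative^[j] (a j * P)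

/-- The formal `f`-integration transform `φ_f : K[t] → K`, `φ_f(t^k) = f_k`. -/
noncomputable def phi (f : LS K) (P : Polynomial K) : K :=
  ∑ i ∈ Finset.range (P.natDegree + 1), P.coeff i * f ((i : ℤ) + 1)

/-- `V_1` of an operator given through its action `T`. -/
def V1A (T : LS K → LS K) : Set (LS K) := {f | InTail f ∧ IsPol (T f)}

/-- `V_n` of an operator given through its action `T`. -/
noncomputable def VnA (T : LS K → LS K) (n : ℕ) : Submodule K (LS K) :=
  Submodule.span K {g | ∃ k < n, ∃ f ∈ V1A T, g = piProj (zmul^[k] f)}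

/-- `φ_f((P(z)-P(t))/(z-t))`, an element of `K[z]` (φ_f applied in the variable `t`). -/
noncomputable def Qof (f : LS K) (P : Polynomial K) : Polynomial K :=
  ∑ u ∈ Finset.range P.natDegree,
    Polynomial.C (∑ k ∈ Finset.Icc (u + 1) P.natDegree, P.coeff k * f ((k - u : ℕ) : ℤ)) *
      Polynomial.X ^ u

/-- The order `ord_{(1,-1)}(L) = max_j (deg a_j - j)`. -/
noncomputable def ordW (m : ℕ) (a : ℕ → Polynomial K) : ℤ :=
  (Finset.range (m + 1)).sup' ⟨0, Finset.mem_range.2 (Nat.zero_lt_succ m)⟩ fun j => ((a j).natDegree : ℤ) - j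

/-- Property (P) of the operator `L = ∑_j (-1)^j a_j(z) ∂_z^j` relative to `d`. -/
def PropP (m : ℕ) (a : ℕ → Polynomial K) (d : ℕ) : Prop :=
  ∀ k : ℕ,
    ∑ j ∈ (Finset.range (m + 1)).filter (fun j => ((a j).natDegree : ℤ) - j = d),
        (a j).leadingCoeff * (ascPochhammer K ((a j).natDegree)).eval ((k : K) + d + 1) ≠ 0

section Aux

variable {K : Type*} [Field K]

lemma phi_eq (f : LS K) (P : Polynomial K) (N : ℕ) (h : P.natDegree < N) :
    phi f P = ∑ i ∈ Finset.range N, P.coeff i * f ((i : ℤ) + 1) := by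
  unfold phi
  refine Finset.sum_subset (Finset.range_subset_range.mpr h) ?_
  intro i _ hni
  simp only [Finset.mem_range, not_lt] at hni
  rw [Polynomial.coeff_eq_zero_of_natDegree_lt (by omega), zero_mul]

lemma phi_add (f : LS K) (P Q : Polynomial K) : phi f (P + Q) = phi f P + phi f Q := by
  set N := max P.natDegree Q.natDegree + 1 with hN
  rw [phi_eq f (P + Q) N (Nat.lt_succ_of_le ((Polynomial.natDegree_add_le P Q))),
      phi_eq f P N (Nat.lt_succ_of_le (le_max_left _ _)),
      phi_eq f Q N (Nat.lt_succ_of_le (le_max_right _ _)), ← Finset.sum_add_distrib]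
  refine Finset.sum_congr rfl fun i _ => ?_
  rw [Polynomial.coeff_add, add_mul]

lemma phi_C_mul (f : LS K) (c : K) (P : Polynomial K) :
    phi f (Polynomial.C c * P) = c * phi f P := by
  rw [phi_eq f _ (P.natDegree + 1) (Nat.lt_succ_of_le (Polynomial.natDegree_C_mul_le c P)),
      phi, Finset.mul_sum]
  refine Finset.sum_congr rfl fun i _ => ?_
  rw [Polynomial.coeff_C_mul, mul_assoc]

lemma phi_sum {ι : Type*} (f : LS K) (S : Finset ι) (P : ι → Polynomial K) :
    phi f (∑ s ∈ S, P s) = ∑ s ∈ S, phi f (P s) := by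
  induction S using Finset.cons_induction with
  | empty => simp [phi]
  | cons s S hs ih => rw [Finset.sum_cons, Finset.sum_cons, phi_add, ih]

lemma phi_X_pow (F : LS K) (s : ℕ) : phi F (Polynomial.X ^ s) = F ((s : ℤ) + 1) := by
  rw [phi, Polynomial.natDegree_X_pow]
  simp [Polynomial.coeff_X_pow]

lemma tail_coeff (f : LS K) (P : Polynomial K) (s : ℕ) :
    pmul P f ((s : ℤ) + 1) = phi f (Polynomial.X ^ s * P) := by
  have hdeg : (Polynomial.X ^ s * P).natDegree < s + (P.natDegree + 1) := by
    have h1 := Polynomial.natDegree_mul_le (p := (Polynomial.X : Polynomial K) ^ s) (q := P)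
    have h2 : ((Polynomial.X : Polynomial K) ^ s).natDegree = s := Polynomial.natDegree_X_pow s
    omega
  rw [phi_eq f _ _ hdeg, Finset.sum_range_add]
  have h0 : ∀ x ∈ Finset.range s,
      (Polynomial.X ^ s * P).coeff x * f ((x : ℤ) + 1) = 0 := by
    intro x hx
    rw [mul_comm ((Polynomial.X : Polynomial K) ^ s) P, Polynomial.coeff_mul_X_pow',
      if_neg (Nat.not_le.mpr (Finset.mem_range.mp hx)), zero_mul]
  rw [Finset.sum_congr rfl h0, Finset.sum_const_zero, zero_add, pmul]
  refine Finset.sum_congr rfl fun i _ => ?_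
  rw [mul_comm ((Polynomial.X : Polynomial K) ^ s) P, Polynomial.coeff_mul_X_pow',
    if_pos (Nat.le_add_right s i)]
  have h3 : s + i - s = i := by omega
  rw [h3]
  congr 1
  push_cast
  ring

lemma zmul_iter (f : LS K) (s : ℕ) (k : ℤ) : zmul^[s] f k = f (k + s) := by
  induction s generalizing f k with
  | zero => simp
  | succ s ih =>
    rw [Function.iterate_succ_apply, ih]
    show f (k + s + 1) = f (k + (s + 1 : ℕ))
    congr 1
    push_cast
    ring

lemma shift_phi (f : LS K) (B : Polynomial K) (s : ℕ) :
    phi (piProj (zmul^[s] f)) B = phi f (Polynomial.X ^ s * B) := by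
  rw [← tail_coeff, pmul, phi]
  refine Finset.sum_congr rfl fun i _ => ?_
  simp only [piProj, zmul_iter]
  rw [if_pos (by omega : (1 : ℤ) ≤ (i : ℤ) + 1)]
  congr 1
  ring

lemma adj_deriv (g : LS K) (B : Polynomial K) :
    phi g (Polynomial.derivative B) = - phi (dz g) B := by
  rw [phi_eq g _ (B.natDegree + 1)
    (Nat.lt_succ_of_le ((Polynomial.natDegree_derivative_le B).trans (Nat.sub_le _ _)))]
  have lhs : ∑ i ∈ Finset.range (B.natDegree + 1),
      (Polynomial.derivative B).coeff i * g ((i : ℤ) + 1)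
      = ∑ i ∈ Finset.range (B.natDegree + 2), ((i : K) * B.coeff i * g (i : ℤ)) := by
    rw [Finset.sum_range_succ' (fun i => (i : K) * B.coeff i * g (i : ℤ)) (B.natDegree + 1)]
    simp only [Nat.cast_zero, zero_mul, Nat.cast_ofNat, add_zero]
    refine Finset.sum_congr rfl fun i _ => ?_
    rw [Polynomial.coeff_derivative]
    push_cast
    ring
  have rhs : - phi (dz g) B
      = ∑ i ∈ Finset.range (B.natDegree + 2), ((i : K) * B.coeff i * g (i : ℤ)) := by
    rw [Finset.sum_range_succ,
      Polynomial.coeff_eq_zero_of_natDegree_lt (by omega : B.natDegree < B.natDegree + 1),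
      mul_zero, zero_mul, add_zero, phi, ← Finset.sum_neg_distrib]
    refine Finset.sum_congr rfl fun i _ => ?_
    simp only [dz]
    have h1 : (i : ℤ) + 1 - 1 = (i : ℤ) := by ring
    rw [h1]
    push_cast
    ring
  rw [lhs, rhs]

lemma adj_deriv_iter (g : LS K) (B : Polynomial K) (j : ℕ) :
    phi g (Polynomial.derivative^[j] B) = (-1 : K) ^ j * phi (dz^[j] g) B := by
  induction j generalizing g with
  | zero => simp
  | succ j ih =>
    rw [Function.iterate_succ_apply', adj_deriv, ih (dz g), Function.iterate_succ_apply]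
    ring

lemma adj_pmul (h : LS K) (a B : Polynomial K) :
    phi (pmul a h) B = phi h (a * B) := by
  conv_lhs => rw [Polynomial.as_sum_range' B (B.natDegree + 1) (lt_add_one _)]
  conv_rhs => rw [Polynomial.as_sum_range' B (B.natDegree + 1) (lt_add_one _)]
  rw [Finset.mul_sum, phi_sum, phi_sum]
  refine Finset.sum_congr rfl fun i _ => ?_
  rw [← Polynomial.C_mul_X_pow_eq_monomial, phi_C_mul, phi_X_pow]
  have hcomm : a * (Polynomial.C (B.coeff i) * Polynomial.X ^ i)
      = Polynomial.C (B.coeff i) * (Polynomial.X ^ i * a) := by ring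
  rw [hcomm, phi_C_mul, ← tail_coeff]

lemma phi_LS_sum {ι : Type*} (S : Finset ι) (F : ι → LS K) (B : Polynomial K) :
    phi (∑ j ∈ S, F j) B = ∑ j ∈ S, phi (F j) B := by
  simp only [phi, Finset.sum_apply, Finset.mul_sum]
  exact Finset.sum_comm

lemma phi_LS_smul (c : K) (F : LS K) (B : Polynomial K) :
    phi (c • F) B = c * phi F B := by
  simp only [phi, Pi.smul_apply, smul_eq_mul, Finset.mul_sum]
  exact Finset.sum_congr rfl fun i _ => by ring

lemma phi_ofPoly (S : Polynomial K) (B : Polynomial K) : phi (ofPoly S) B = 0 := by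
  unfold phi ofPoly
  refine Finset.sum_eq_zero fun i _ => ?_
  rw [if_neg (by omega : ¬ ((i : ℤ) + 1 ≤ 0)), mul_zero]

lemma adjoint_phi (g : LS K) (mR : ℕ) (aR : ℕ → Polynomial K) (B : Polynomial K) :
    phi g (Wadj mR aR B) = phi (Wact mR aR g) B := by
  unfold Wadj Wact
  rw [phi_sum, phi_LS_sum]
  refine Finset.sum_congr rfl fun j _ => ?_
  rw [adj_deriv_iter, ← adj_pmul, phi_LS_smul]

lemma poly_part (f : LS K) (hf : InTail f) (P : Polynomial K) (u : ℕ) :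
    pmul P f (-(u : ℤ)) = (Qof f P).coeff u := by
  have hQ : (Qof f P).coeff u = if u < P.natDegree then
      ∑ k ∈ Finset.Icc (u + 1) P.natDegree, P.coeff k * f ((k - u : ℕ) : ℤ) else 0 := by
    unfold Qof
    rw [Polynomial.finset_sum_coeff]
    have hterm : ∀ u' ∈ Finset.range P.natDegree,
        (Polynomial.C (∑ k ∈ Finset.Icc (u' + 1) P.natDegree,
            P.coeff k * f ((k - u' : ℕ) : ℤ)) * Polynomial.X ^ u').coeff u
        = if u = u' then (∑ k ∈ Finset.Icc (u' + 1) P.natDegree,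
            P.coeff k * f ((k - u' : ℕ) : ℤ)) else 0 := by
      intro u' _
      rw [Polynomial.coeff_C_mul, Polynomial.coeff_X_pow, mul_ite, mul_one, mul_zero]
    rw [Finset.sum_congr rfl hterm, Finset.sum_ite_eq]
    simp [Finset.mem_range]
  have hsub : Finset.Icc (u + 1) P.natDegree ⊆ Finset.range (P.natDegree + 1) := by
    intro x hx
    have := (Finset.mem_Icc.mp hx).2
    simp only [Finset.mem_range]
    omega
  have hvan : ∀ x ∈ Finset.range (P.natDegree + 1), x ∉ Finset.Icc (u + 1) P.natDegree →
      P.coeff x * f (-(u : ℤ) + x) = 0 := by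
    intro x hx hnx
    simp only [Finset.mem_range] at hx
    simp only [Finset.mem_Icc, not_and, not_le] at hnx
    have hxu : x ≤ u := by omega
    rw [hf (-(u : ℤ) + x) (by omega), mul_zero]
  rw [hQ, pmul, ← Finset.sum_subset hsub hvan]
  by_cases hu : u < P.natDegree
  · rw [if_pos hu]
    refine Finset.sum_congr rfl fun i hi => ?_
    have h1 : u + 1 ≤ i := (Finset.mem_Icc.mp hi).1
    have h2 : -(u : ℤ) + i = ((i - u : ℕ) : ℤ) := by omega
    rw [h2]
  · rw [if_neg hu, Finset.Icc_eq_empty (by omega), Finset.sum_empty]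

end Aux

/-- Proposition 5.9 (ii), (iii): Rodrigues formula gives Padé-type
approximants. Any nonzero R ∈ I_n(L) with P := R*·A ≠ 0 yields a weight n Padé-type
approximant (P,Q_1,…,Q_d) of a basis (f_j) of V_1(L), and the remainders have the
expansion P·f_j − Q_j = ∑_{k≥n} φ_{f_j}(t^k·P(t)) z^{−(k+1)}. -/
theorem stmt_8 {K : Type*} [Field K] [CharZero K] (m : ℕ) (a : ℕ → Polynomial K)
    (d : ℕ) (hd : 0 < d)
    (hrank : Module.rank K (Submodule.span K (V1A (Wact m a))) = (d : Cardinal))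
    (f : Fin d → LS K) (hmem : ∀ j, f j ∈ V1A (Wact m a)) (hli : LinearIndependent K f)
    (hspan : Submodule.span K (Set.range f) = Submodule.span K (V1A (Wact m a)))
    (n : ℕ) (hn : 1 ≤ n) (A : Polynomial K) (mR : ℕ) (aR : ℕ → Polynomial K)
    (hR : ∀ g ∈ VnA (Wact m a) n, IsPol (Wact mR aR g)) (hR0 : ∃ j ≤ mR, aR j ≠ 0)
    (hP : Wadj mR aR A ≠ 0) :
    (∀ j, ∀ k : ℤ, k ≤ (n : ℤ) →
        (pmul (Wadj mR aR A) (f j) - ofPoly (Qof (f j) (Wadj mR aR A))) k = 0) ∧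
      (∀ j, ∀ k : ℕ, n ≤ k →
        (pmul (Wadj mR aR A) (f j) - ofPoly (Qof (f j) (Wadj mR aR A))) ((k : ℤ) + 1) =
          phi (f j) (Polynomial.X ^ k * Wadj mR aR A)) := by
  have hkey : ∀ j, ∀ s : ℕ, s < n → pmul (Wadj mR aR A) (f j) ((s : ℤ) + 1) = 0 := by
    intro j s hs
    have hg : piProj (zmul^[s] (f j)) ∈ VnA (Wact m a) n :=
      Submodule.subset_span ⟨s, hs, f j, hmem j, rfl⟩
    obtain ⟨S, hS⟩ := hR _ hg
    rw [tail_coeff, ← shift_phi, adjoint_phi, hS, phi_ofPoly]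
  constructor
  · intro j k hk
    simp only [Pi.sub_apply]
    rw [sub_eq_zero]
    by_cases hk0 : k ≤ 0
    · set u : ℕ := (-k).toNat with hu
      have hk' : k = -(u : ℤ) := by omega
      rw [hk', poly_part (f j) (hmem j).1 (Wadj mR aR A) u]
      simp only [ofPoly]
      rw [if_pos (by omega : -(u : ℤ) ≤ 0)]
      congr 1
      omega
    · push_neg at hk0
      obtain ⟨s, rfl⟩ : ∃ s : ℕ, k = (s : ℤ) + 1 := ⟨(k - 1).toNat, by omega⟩
      simp only [ofPoly]
      rw [if_neg (by omega : ¬ ((s : ℤ) + 1 ≤ 0)), hkey j s (by omega)]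
  · intro j k hk
    simp only [Pi.sub_apply, ofPoly]
    rw [if_neg (by omega : ¬ ((k : ℤ) + 1 ≤ 0)), sub_zero, tail_coeff]
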